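/- Let C assign a rational number C(m; d) to each pair of a finite tuple m of positive integers and an integer d ≥ 1, with C(m; d) = 0 whenever m₁+⋯+m_l ≠ 4d + l. Then there is at most one F, assigning a rational number F(m; d) to each such pair (with m possibly empty), such that: F is symmetric in the entries of m; F satisfies the divisor relation F((1)⌢m; d) = d·F(m; d); F(m; d) = 0 whenever some entry of m is ≥ 4; F(m; d) = 0 whenever d ≡ k_d(m) (mod 2); F(m; d) = 0 whenever k_d(m) < 0; F((3); 1) = −1; F satisfies recursions (R1) and (R2) with complex input C at all admissible (d,m); and, for every d ≥ 2, F((); d) = (1/(d+1)) Σ_{d₁,d₂ ≥ 1, d₁+d₂=d} [ d₂ C(2d−1, 2d₁) F((3); d₁+1) F((); d₂) + ((2d₂−d₁−1)/(2d₂−1)) C(2d−2, 2d₁) ( F((2,2); d₁+1) F((); d₂) − F((2); d₁+1) F((2); d₂) ) ]. That is, any two such F agree everywhere. -/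

import Mathlib

/-!
Induction on the degree `d`, and for fixed `d` on the length of `m`. Entries `≥ 4` force
`F(m; d) = 0` and entries `1` are removed by the divisor relation, so `m` may be taken to
consist of `2`s and `3`s. If `k_d(m) ≥ 1`, (R1) applied to `m` with one entry lowered by one
expresses `F(m; d)` through invariants of lower degree. If `k_d(m) = 0`, then
`2d = #2 + 2·#3`, so `m` contains two `2`s or two `3`s, or `(m, d) = ((3), 1)`; (R2) moves a
unit between two entries, reducing `(2,2)` to `(3,1)` (divisor relation) and `(3,3)` to
`(4,2)` (vanishing). Finally, for `d ≥ 2` the formula for `F((); d)` involves degree `d`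
only through `F((3); d)`, `F((2,2); d)`, `F((2); d)`, which come from (R1); for `d = 1`,
(R1) at `(2, (3))` has vanishing left-hand side `F((4); 2)` and gives `F((); 1) = C((3,3); 1)`.
-/

open Finset

/-- Binomial coefficient `C(n,k)` as a rational number, with the convention that
`C(n,k) = 0` whenever `k < 0` or `k > n`. -/
def binom (n k : ℤ) : ℚ :=
  if 0 ≤ k ∧ k ≤ n then (n.toNat.choose k.toNat : ℚ) else 0

/-- Pairs `(d₀, d')` of positive integers with `d₀ + 2d' = d`. -/
def pairsHalf (d : ℕ) : Finset (ℕ × ℕ) :=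
  (Finset.range (d + 1) ×ˢ Finset.range (d + 1)).filter
    fun p => 1 ≤ p.1 ∧ 1 ≤ p.2 ∧ p.1 + 2 * p.2 = d

/-- Pairs `(d₁, d₂)` of positive integers with `d₁ + d₂ = d`. -/
def pairsSum (d : ℕ) : Finset (ℕ × ℕ) :=
  (Finset.HasAntidiagonal.antidiagonal d).filter fun p => 1 ≤ p.1 ∧ 1 ≤ p.2

/-- The subtuple of a tuple `m` indexed (in increasing order) by a set `S`
of positions. -/
def subt {α : Type*} (m : List α) (S : Finset (Fin m.length)) : List α :=
  (S.sort (· ≤ ·)).map m.get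

/-- All entries of the tuple `m` are positive integers. -/
def posl (m : List ℕ) : Prop := ∀ x ∈ m, 0 < x

/-- For a degree `d` and a tuple `m = (m₁,…,m_l)`, the number
`k_d(m) = 2d + l − (m₁ + ⋯ + m_l)`. -/
def kd (d : ℕ) (m : List ℕ) : ℤ :=
  2 * (d : ℤ) + m.length - (m.sum : ℤ)

/-- The term `T₀ = −2^{l−2} d C(m⌢(3); d/2)` if `d` is even and `k_d(m) = 2`,
and `0` otherwise; the power `2^{l−2}` is taken in `ℚ`. -/
def TP3 (C : List ℕ → ℕ → ℚ) (d : ℕ) (m : List ℕ) : ℚ :=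
  if Even d ∧ kd d m = 2 then
    -((2 : ℚ) ^ ((m.length : ℤ) - 2)) * (d : ℚ) * C (m ++ [3]) (d / 2)
  else 0

/-- The WDVV-type recursion (R1) for the real invariants of `(ℙ³,τ₃)` at
`(d, m)` with `m = x :: t`:  the sums over `(I,J) ∈ P(l)` are encoded by the
subsets `S` of the positions of `t` that are placed in `I` (so `m_I = x :: t_S`,
`m_J = t_{Sᶜ}` and `|I| = |S| + 1`). -/
def R1 (C F : List ℕ → ℕ → ℚ) (d : ℕ) (x : ℕ) (t : List ℕ) : Prop :=
  F ((x + 1) :: t) d =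
    TP3 C d (x :: t)
    - ∑ p ∈ pairsHalf d, (p.2 : ℚ) *
        ∑ S : Finset (Fin t.length), (2 : ℚ) ^ S.card *
          ∑ i ∈ Finset.Icc 1 2,
            C ((x :: subt t S) ++ [i]) p.2 * F ((3 - i) :: subt t Sᶜ) p.1
    + ∑ q ∈ pairsSum d,
        ∑ S : Finset (Fin t.length),
          ((q.2 : ℚ) * binom (kd d (x :: t) - 2) (kd q.1 (x :: subt t S) - 1)
            - (q.1 : ℚ) * binom (kd d (x :: t) - 2) (kd q.1 (x :: subt t S)))
          * F (x :: subt t S) q.1 * F (subt t Sᶜ) q.2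

/-- The WDVV-type recursion (R2) for the real invariants of `(ℙ³,τ₃)` at
`(d, m)` with `m = x :: y :: t`: the sums over `(I,J) ∈ P_{;2}(l)` are encoded
by the subsets `S` of the positions of `t` placed in `I` (so `m_I = x :: t_S`,
`m_J = y :: t_{Sᶜ}`, `|I| = |S| + 1` and `|J| = |Sᶜ| + 1`). -/
def R2 (C F : List ℕ → ℕ → ℚ) (d : ℕ) (x y : ℕ) (t : List ℕ) : Prop :=
  F (x :: (y + 1) :: t) d =
    F ((x + 1) :: y :: t) d
    + ∑ p ∈ pairsHalf d, (p.2 : ℚ) *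
        ∑ S : Finset (Fin t.length),
          ∑ i ∈ Finset.Icc 1 2,
            ((2 : ℚ) ^ S.card * C ((x :: subt t S) ++ [i]) p.2
                * F ((3 - i) :: y :: subt t Sᶜ) p.1
              - (2 : ℚ) ^ (Sᶜ : Finset (Fin t.length)).card
                * C ((y :: subt t Sᶜ) ++ [3 - i]) p.2
                * F (i :: x :: subt t S) p.1)
    + ∑ q ∈ pairsSum d,
        ∑ S : Finset (Fin t.length),
          ((q.1 : ℚ) * binom (kd d (x :: y :: t) - 1) (kd q.1 (x :: subt t S))
            - (q.2 : ℚ) * binom (kd d (x :: y :: t) - 1) (kd q.2 (y :: subt t Sᶜ)))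
          * F (x :: subt t S) q.1 * F (y :: subt t Sᶜ) q.2

/-- The full set of conditions on the real genus 0 invariants `F(m; d)` of
`(ℙ³,τ₃)`: symmetry, the divisor relation, the various vanishing statements, the
input `F([3]; 1) = −1`, the recursions (R1) and (R2), and the formula for the
purely real point-counting invariants `F([]; d)`. -/
def GoodP3 (C F : List ℕ → ℕ → ℚ) : Prop :=
  (∀ d : ℕ, 1 ≤ d → ∀ m m' : List ℕ, posl m → m.Perm m' → F m d = F m' d)
    ∧ (∀ d : ℕ, 1 ≤ d → ∀ m : List ℕ, posl m → F (1 :: m) d = (d : ℚ) * F m d)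
    ∧ (∀ d : ℕ, 1 ≤ d → ∀ m : List ℕ, posl m → (∃ x ∈ m, 4 ≤ x) → F m d = 0)
    ∧ (∀ d : ℕ, 1 ≤ d → ∀ m : List ℕ, posl m →
        (d : ℤ) % 2 = kd d m % 2 → F m d = 0)
    ∧ (∀ d : ℕ, 1 ≤ d → ∀ m : List ℕ, posl m → kd d m < 0 → F m d = 0)
    ∧ F [3] 1 = -1
    ∧ (∀ d : ℕ, 1 ≤ d → ∀ (x : ℕ) (t : List ℕ), posl (x :: t) →
        2 ≤ kd d (x :: t) → R1 C F d x t)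
    ∧ (∀ d : ℕ, 1 ≤ d → ∀ (x y : ℕ) (t : List ℕ), posl (x :: y :: t) →
        1 ≤ kd d (x :: y :: t) → R2 C F d x y t)
    ∧ (∀ d : ℕ, 2 ≤ d →
        F [] d = (1 / ((d : ℚ) + 1)) *
          ∑ q ∈ pairsSum d,
            ((q.2 : ℚ) * binom (2 * (d : ℤ) - 1) (2 * (q.1 : ℤ))
                * F [3] (q.1 + 1) * F [] q.2
              + ((2 * (q.2 : ℚ) - (q.1 : ℚ) - 1) / (2 * (q.2 : ℚ) - 1))
                * binom (2 * (d : ℤ) - 2) (2 * (q.1 : ℤ))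
                * (F [2, 2] (q.1 + 1) * F [] q.2 - F [2] (q.1 + 1) * F [2] q.2)))

theorem mem_pairsHalf {d : ℕ} {p : ℕ × ℕ} :
    p ∈ pairsHalf d ↔ 1 ≤ p.1 ∧ 1 ≤ p.2 ∧ p.1 + 2 * p.2 = d := by
  simp only [pairsHalf, mem_filter, mem_product, mem_range]
  omega

theorem mem_pairsSum {d : ℕ} {q : ℕ × ℕ} :
    q ∈ pairsSum d ↔ 1 ≤ q.1 ∧ 1 ≤ q.2 ∧ q.1 + q.2 = d := by
  simp only [pairsSum, mem_filter, HasAntidiagonal.mem_antidiagonal]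
  omega

theorem posl_cons {a : ℕ} {l : List ℕ} : posl (a :: l) ↔ 0 < a ∧ posl l :=
  List.forall_mem_cons

theorem posl_subt {m : List ℕ} (h : posl m) (S : Finset (Fin m.length)) : posl (subt m S) := by
  simp only [posl, subt, List.mem_map]
  rintro _ ⟨i, -, rfl⟩
  exact h _ (List.get_mem m i)

theorem subt_nil (S : Finset (Fin ([] : List ℕ).length)) : subt [] S = [] := by
  obtain rfl : S = ∅ := eq_empty_of_forall_notMem fun i => i.elim0
  simp [subt]

theorem List.exists_perm_cons_cons_of_two_le_count {α : Type*} [DecidableEq α] {a : α}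
    {m : List α} (h : 2 ≤ m.count a) : ∃ t, m.Perm (a :: a :: t) :=
  (List.replicate_sublist_iff.2 h).exists_perm_append

theorem sum_length_of_forall_mem_two_or_three {m : List ℕ} (h : ∀ x ∈ m, x = 2 ∨ x = 3) :
    m.sum = 2 * m.count 2 + 3 * m.count 3 ∧ m.length = m.count 2 + m.count 3 := by
  induction m with
  | nil => simp
  | cons a t ih =>
    obtain ⟨ha, ht⟩ := List.forall_mem_cons.1 h
    obtain ⟨hsum, hlen⟩ := ih ht
    rcases ha with rfl | rfl <;> simp [hsum, hlen] <;> omega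

theorem kd_eq_zero_cases {d : ℕ} (hd : 1 ≤ d) {m : List ℕ} (h : ∀ x ∈ m, x = 2 ∨ x = 3)
    (hk : kd d m = 0) : 2 ≤ m.count 2 ∨ 2 ≤ m.count 3 ∨ (d = 1 ∧ m = [3]) := by
  obtain ⟨hsum, hlen⟩ := sum_length_of_forall_mem_two_or_three h
  simp only [kd] at hk
  by_contra! hcases
  have hc2 : m.count 2 = 0 := by omega
  have hd1 : d = 1 := by omega
  refine hcases.2.2 hd1 ((List.eq_replicate_iff (n := 1)).2 ⟨by omega, fun x hx => ?_⟩)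
  rcases h x hx with rfl | rfl
  · exact absurd hx (List.count_eq_zero.1 hc2)
  · rfl

def AgreeBelow (F F' : List ℕ → ℕ → ℚ) (d : ℕ) : Prop :=
  ∀ e, 1 ≤ e → e < d → ∀ m, posl m → F m e = F' m e

section

variable {C F F' : List ℕ → ℕ → ℚ} {d : ℕ}

theorem eq_of_perm (hF : GoodP3 C F) (hF' : GoodP3 C F') (hd : 1 ≤ d) {m m' : List ℕ}
    (hm : posl m) (hp : m.Perm m') (h : F m' d = F' m' d) : F m d = F' m d := by
  obtain ⟨hperm, -⟩ := hF
  obtain ⟨hperm', -⟩ := hF'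
  rw [hperm d hd m m' hm hp, hperm' d hd m m' hm hp, h]

theorem eq_succ_cons_of_R1 (hF : GoodP3 C F) (hF' : GoodP3 C F') (hd : 1 ≤ d)
    (hbelow : AgreeBelow F F' d) {x : ℕ} {t : List ℕ} (hpos : posl (x :: t))
    (hk : 2 ≤ kd d (x :: t)) : F ((x + 1) :: t) d = F' ((x + 1) :: t) d := by
  obtain ⟨-, -, -, -, -, -, hR1, -⟩ := hF
  obtain ⟨-, -, -, -, -, -, hR1', -⟩ := hF'
  obtain ⟨hx, ht⟩ := posl_cons.1 hpos
  rw [hR1 d hd x t hpos hk, hR1' d hd x t hpos hk]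
  congr 1
  · congr 1
    refine sum_congr rfl fun p hp => ?_
    obtain ⟨hp1, hp2, hpd⟩ := mem_pairsHalf.1 hp
    refine congr_arg _ (sum_congr rfl fun S _ => congr_arg _ (sum_congr rfl fun i hi => ?_))
    have hi : i ≤ 2 := (mem_Icc.1 hi).2
    rw [hbelow p.1 hp1 (by omega) _ (posl_cons.2 ⟨by omega, posl_subt ht Sᶜ⟩)]
  · refine sum_congr rfl fun q hq => sum_congr rfl fun S _ => ?_
    obtain ⟨hq1, hq2, hqd⟩ := mem_pairsSum.1 hq
    rw [hbelow q.1 hq1 (by omega) _ (posl_cons.2 ⟨hx, posl_subt ht S⟩),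
      hbelow q.2 hq2 (by omega) _ (posl_subt ht Sᶜ)]

theorem eq_cons_succ_of_R2 (hF : GoodP3 C F) (hF' : GoodP3 C F') (hd : 1 ≤ d)
    (hbelow : AgreeBelow F F' d) {x y : ℕ} {t : List ℕ} (hpos : posl (x :: y :: t))
    (hk : 1 ≤ kd d (x :: y :: t)) (hshift : F ((x + 1) :: y :: t) d = F' ((x + 1) :: y :: t) d) :
    F (x :: (y + 1) :: t) d = F' (x :: (y + 1) :: t) d := by
  obtain ⟨hx, hy, ht⟩ : 0 < x ∧ 0 < y ∧ posl t := by
    simpa only [posl_cons] using hpos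
  obtain ⟨-, -, -, -, -, -, -, hR2, -⟩ := hF
  obtain ⟨-, -, -, -, -, -, -, hR2', -⟩ := hF'
  rw [hR2 d hd x y t hpos hk, hR2' d hd x y t hpos hk, hshift]
  congr 1
  · congr 1
    refine sum_congr rfl fun p hp => ?_
    obtain ⟨hp1, hp2, hpd⟩ := mem_pairsHalf.1 hp
    refine congr_arg _ (sum_congr rfl fun S _ => sum_congr rfl fun i hi => ?_)
    obtain ⟨hi1, hi2⟩ := mem_Icc.1 hi
    rw [hbelow p.1 hp1 (by omega) _ (posl_cons.2 ⟨by omega, posl_cons.2 ⟨hy, posl_subt ht Sᶜ⟩⟩),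
      hbelow p.1 hp1 (by omega) _ (posl_cons.2 ⟨hi1, posl_cons.2 ⟨hx, posl_subt ht S⟩⟩)]
  · refine sum_congr rfl fun q hq => sum_congr rfl fun S _ => ?_
    obtain ⟨hq1, hq2, hqd⟩ := mem_pairsSum.1 hq
    rw [hbelow q.1 hq1 (by omega) _ (posl_cons.2 ⟨hx, posl_subt ht S⟩),
      hbelow q.2 hq2 (by omega) _ (posl_cons.2 ⟨hy, posl_subt ht Sᶜ⟩)]

theorem GoodP3.nil_one (hF : GoodP3 C F) : F [] 1 = C [3, 3] 1 := by
  obtain ⟨-, -, hfour, -, -, h31, hR1, -⟩ := hF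
  have h := hR1 2 (by norm_num) 3 [] (by simp [posl]) (by norm_num [kd])
  have hPH : pairsHalf 2 = ∅ := by decide
  have hPS : pairsSum 2 = {(1, 1)} := by
    ext; simp only [mem_pairsSum, mem_singleton, Prod.ext_iff]; omega
  rw [R1, hfour 2 (by norm_num) [4] (by simp [posl]) ⟨4, by simp⟩, hPH, hPS] at h
  have : IsEmpty (Fin ([] : List ℕ).length) := Fin.isEmpty'
  simp only [sum_empty, sum_singleton, univ_unique, subt_nil] at h
  norm_num [binom, kd, TP3, h31] at h
  linarith

theorem eq_nil_of_agreeBelow (hF : GoodP3 C F) (hF' : GoodP3 C F') (hd : 1 ≤ d)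
    (hbelow : AgreeBelow F F' d) : F [] d = F' [] d := by
  obtain rfl | hd2 : d = 1 ∨ 2 ≤ d := by omega
  · rw [hF.nil_one, hF'.nil_one]
  have h3 : F [3] d = F' [3] d :=
    eq_succ_cons_of_R1 hF hF' hd hbelow (x := 2) (t := []) (by simp [posl]) (by simp [kd]; omega)
  have h22 : F [2, 2] d = F' [2, 2] d :=
    eq_succ_cons_of_R1 hF hF' hd hbelow (x := 1) (t := [2]) (by simp [posl]) (by simp [kd]; omega)
  have h2 : F [2] d = F' [2] d :=
    eq_succ_cons_of_R1 hF hF' hd hbelow (x := 1) (t := []) (by simp [posl]) (by simp [kd]; omega)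
  obtain ⟨-, -, -, -, -, -, -, -, hnil⟩ := hF
  obtain ⟨-, -, -, -, -, -, -, -, hnil'⟩ := hF'
  rw [hnil d hd2, hnil' d hd2]
  refine congr_arg _ (sum_congr rfl fun q hq => ?_)
  obtain ⟨hq1, hq2, hqd⟩ := mem_pairsSum.1 hq
  have hlow := hbelow q.2 hq2 (by omega)
  rw [hlow [] (by simp [posl]), hlow [2] (by simp [posl])]
  obtain hq1d | hq1d : q.1 + 1 = d ∨ q.1 + 1 < d := by omega
  · rw [hq1d, h3, h22, h2]
  · have hmid := hbelow (q.1 + 1) (by omega) hq1d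
    rw [hmid [3] (by simp [posl]), hmid [2, 2] (by simp [posl]), hmid [2] (by simp [posl])]

theorem eq_of_one_mem (hF : GoodP3 C F) (hF' : GoodP3 C F') (hd : 1 ≤ d) {m : List ℕ}
    (hm : posl m) (h1 : 1 ∈ m)
    (hshorter : ∀ m', posl m' → m'.length < m.length → F m' d = F' m' d) :
    F m d = F' m d := by
  have hpe : posl (m.erase 1) := fun z hz => hm z (List.mem_of_mem_erase hz)
  have hlen : (m.erase 1).length < m.length := by
    rw [List.length_erase_of_mem h1]
    exact Nat.sub_lt (List.length_pos_of_mem h1) one_pos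
  refine eq_of_perm hF hF' hd hm (List.perm_cons_erase h1) ?_
  obtain ⟨-, hdiv, -⟩ := hF
  obtain ⟨-, hdiv', -⟩ := hF'
  rw [hdiv d hd _ hpe, hdiv' d hd _ hpe, hshorter _ hpe hlen]

theorem eq_of_kd_eq_zero (hF : GoodP3 C F) (hF' : GoodP3 C F') (hd : 1 ≤ d)
    (hbelow : AgreeBelow F F' d) {m : List ℕ} (hm : posl m) (h23 : ∀ x ∈ m, x = 2 ∨ x = 3)
    (hk : kd d m = 0) (hshorter : ∀ m', posl m' → m'.length < m.length → F m' d = F' m' d) :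
    F m d = F' m d := by
  rcases kd_eq_zero_cases hd h23 hk with h2 | h3 | ⟨rfl, rfl⟩
  · obtain ⟨t, hp⟩ := List.exists_perm_cons_cons_of_two_le_count h2
    have ht : posl t := fun x hx => hm x (hp.mem_iff.2 (by simp [hx]))
    have hsum := hp.sum_eq
    have hlen := hp.length_eq
    refine eq_of_perm hF hF' hd hm hp (eq_cons_succ_of_R2 hF hF' hd hbelow (x := 2) (y := 1)
      (by simpa [posl_cons] using ht) (by simp_all [kd]; omega) ?_)
    have h3t : posl (3 :: t) := posl_cons.2 ⟨by norm_num, ht⟩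
    refine eq_of_perm hF hF' hd (posl_cons.2 ⟨by norm_num, posl_cons.2 ⟨one_pos, ht⟩⟩)
      (List.Perm.swap 1 3 t) ?_
    obtain ⟨-, hdiv, -⟩ := hF
    obtain ⟨-, hdiv', -⟩ := hF'
    rw [hdiv d hd _ h3t, hdiv' d hd _ h3t, hshorter _ h3t (by simp [hlen])]
  · obtain ⟨t, hp⟩ := List.exists_perm_cons_cons_of_two_le_count h3
    have ht : posl t := fun x hx => hm x (hp.mem_iff.2 (by simp [hx]))
    have hsum := hp.sum_eq
    have hlen := hp.length_eq
    have h42 : posl (4 :: 2 :: t) := by simpa [posl_cons] using ht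
    refine eq_of_perm hF hF' hd hm hp (eq_cons_succ_of_R2 hF hF' hd hbelow (x := 3) (y := 2)
      (by simpa [posl_cons] using ht) (by simp_all [kd]; omega) ?_)
    obtain ⟨-, -, hfour, -⟩ := hF
    obtain ⟨-, -, hfour', -⟩ := hF'
    rw [hfour d hd _ h42 ⟨4, by simp⟩, hfour' d hd _ h42 ⟨4, by simp⟩]
  · obtain ⟨-, -, -, -, -, h31, -⟩ := hF
    obtain ⟨-, -, -, -, -, h31', -⟩ := hF'
    rw [h31, h31']

theorem eq_of_agreeBelow (hF : GoodP3 C F) (hF' : GoodP3 C F') (hd : 1 ≤ d)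
    (hbelow : AgreeBelow F F' d) {m : List ℕ} (hm : posl m) : F m d = F' m d := by
  induction hn : m.length using Nat.strong_induction_on generalizing m with
  | _ n ih =>
  have hshorter : ∀ m', posl m' → m'.length < m.length → F m' d = F' m' d :=
    fun m' hm' hlt => ih _ (hn ▸ hlt) hm' rfl
  by_cases hbig : ∃ x ∈ m, 4 ≤ x
  · obtain ⟨-, -, hfour, -⟩ := hF
    obtain ⟨-, -, hfour', -⟩ := hF'
    rw [hfour d hd m hm hbig, hfour' d hd m hm hbig]
  by_cases h1 : 1 ∈ m
  · exact eq_of_one_mem hF hF' hd hm h1 hshorter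
  have h23 : ∀ x ∈ m, x = 2 ∨ x = 3 := fun x hx => by
    have := hm x hx
    have : x ≠ 1 := fun h => h1 (h ▸ hx)
    have : ¬ 4 ≤ x := fun h => hbig ⟨x, hx, h⟩
    omega
  rcases lt_trichotomy (kd d m) 0 with hkneg | hkzero | hkpos
  · obtain ⟨-, -, -, -, hneg, -⟩ := hF
    obtain ⟨-, -, -, -, hneg', -⟩ := hF'
    rw [hneg d hd m hm hkneg, hneg' d hd m hm hkneg]
  · exact eq_of_kd_eq_zero hF hF' hd hbelow hm h23 hkzero hshorter
  obtain _ | ⟨c, t⟩ := m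
  · exact eq_nil_of_agreeBelow hF hF' hd hbelow
  have hc := h23 c List.mem_cons_self
  obtain ⟨x, rfl, hx⟩ : ∃ x, c = x + 1 ∧ 0 < x := ⟨c - 1, by omega, by omega⟩
  refine eq_succ_cons_of_R1 hF hF' hd hbelow (posl_cons.2 ⟨hx, (posl_cons.1 hm).2⟩) ?_
  simp only [kd, List.sum_cons, List.length_cons] at hkpos ⊢
  omega

end

theorem stmt_16_general (C F F' : List ℕ → ℕ → ℚ)
    (hF : GoodP3 C F) (hF' : GoodP3 C F') :
    ∀ d : ℕ, 1 ≤ d → ∀ m : List ℕ, posl m → F m d = F' m d := by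
  intro d
  induction d using Nat.strong_induction_on with
  | _ d ih => exact fun hd m hm => eq_of_agreeBelow hF hF' hd (fun e he hed => ih e hed he) hm

/-- There is at most one function `F` on pairs of a tuple of positive integers
and a positive degree satisfying all the conditions of `GoodP3`. -/
theorem stmt_16 (C F F' : List ℕ → ℕ → ℚ)
    (hC : ∀ d : ℕ, 1 ≤ d → ∀ m : List ℕ, posl m →
      m.sum ≠ 4 * d + m.length → C m d = 0)
    (hF : GoodP3 C F) (hF' : GoodP3 C F') :
    ∀ d : ℕ, 1 ≤ d → ∀ m : List ℕ, posl m → F m d = F' m d :=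
  stmt_16_general C F F' hF hF'
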